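/- Let N ≥ 5 and let j, k be integers with 1 < j − 1, j − 1 < k − 2, k − 2 < N − 1, and j − 1 = min{ j − 1, k − j, N + 1 − k }. Then K(B_1, B_j, B_k) = 0. -/

import Mathlib

noncomputable section

/-- The field `F = ℝ(B_1, …, B_N)` of rational functions in `N` variables
indexed by `ZMod N` (indices read modulo `N`). -/
abbrev RatF (N : ℕ) : Type := FractionRing (MvPolynomial (ZMod N) ℝ)

/-- The generator `B_i` of `ℝ(B_1, …, B_N)`. -/
noncomputable def Bgen (N : ℕ) (i : ZMod N) : RatF N :=
  algebraMap (MvPolynomial (ZMod N) ℝ) (RatF N) (MvPolynomial.X i)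

/-! The three generators `B_1, B_j, B_k` cut the cycle `ℤ/N` into arcs of lengths
`j - 1`, `k - j`, `N + 1 - k`, all at least `2`; hence no two of them are adjacent and every
`S2`-bracket among them vanishes. A `C2N`-bracket of two of them vanishes unless they are at
distance `2`, in which case it is a rational function of `B_a, B_{a+1}, B_{a+2}`, none of which
is adjacent to the third generator; since `{·, B_c}_{S2}` is a derivation, whose kernel is a
subfield, the `S2`-bracket of that value with `B_c` vanishes as well. -/

theorem ZMod.intCast_ne_intCast_of_abs_sub_lt {N : ℕ} {a b : ℤ} (hab : a ≠ b)
    (h : |a - b| < N) : (a : ZMod N) ≠ b := by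
  rw [Ne, ZMod.intCast_eq_intCast_iff_dvd_sub]
  intro hdvd
  have := Int.eq_zero_of_abs_lt_dvd hdvd (by rwa [abs_sub_comm])
  omega

def Derivation.ofBracketLeft {R A : Type*} [CommSemiring R] [CommRing A] [Algebra R A]
    (b : A → A → A) (hadd : ∀ x y z, b (x + y) z = b x z + b y z)
    (hsmul : ∀ (c : R) x y, b (c • x) y = c • b x y)
    (hleib : ∀ x y z, b (x * y) z = x * b y z + y * b x z) (z : A) : Derivation R A A :=
  Derivation.mk' { toFun := (b · z), map_add' := (hadd · · z), map_smul' := (hsmul · · z) }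
    (hleib · · z)

variable {N : ℕ}

theorem s2_Bgen_eq_zero_of_gap {bS : RatF N → RatF N → RatF N}
    (hS_gen : ∀ i j : ZMod N,
      bS (Bgen N i) (Bgen N j) =
        ((if i + 1 = j then (1 : ℝ) else 0) - (if i - 1 = j then (1 : ℝ) else 0)) •
          (Bgen N i * Bgen N j))
    {u v : ZMod N} {d : ℤ} (hv : v = u + d) (hd : 2 ≤ d) (hdN : d ≤ N - 2) :
    bS (Bgen N u) (Bgen N v) = 0 := by
  have hne : ∀ e : ℤ, |e| ≤ 1 → u + e ≠ v := fun e he => by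
    rw [abs_le] at he
    rw [hv]
    exact (add_right_injective u).ne
      (ZMod.intCast_ne_intCast_of_abs_sub_lt (by omega) (by rw [abs_lt]; omega))
  have h1 : u + 1 ≠ v := by exact_mod_cast hne 1 le_rfl
  have h2 : u - 1 ≠ v := by simpa [sub_eq_add_neg] using hne (-1) le_rfl
  rw [hS_gen, if_neg h1, if_neg h2, sub_zero, zero_smul]

theorem c2n_Bgen_eq_zero_of_gap {bC : RatF N → RatF N → RatF N}
    (hC_gen0 : ∀ i j : ZMod N,
      j - i ≠ 1 → j - i ≠ -1 → j - i ≠ 2 → j - i ≠ -2 → bC (Bgen N i) (Bgen N j) = 0)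
    {u v : ZMod N} {d : ℤ} (hv : v = u + d) (hd : 3 ≤ d) (hdN : d ≤ N - 3) :
    bC (Bgen N u) (Bgen N v) = 0 := by
  have hne : ∀ e : ℤ, |e| ≤ 2 → v - u ≠ e := fun e he => by
    rw [abs_le] at he
    rw [hv, add_sub_cancel_left]
    exact ZMod.intCast_ne_intCast_of_abs_sub_lt (by omega) (by rw [abs_lt]; omega)
  apply hC_gen0 u v
  · exact_mod_cast hne 1 (by norm_num)
  · exact_mod_cast hne (-1) (by norm_num)
  · exact_mod_cast hne 2 (by norm_num)
  · exact_mod_cast hne (-2) (by norm_num)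

theorem s2_c2n_Bgen_eq_zero_of_gaps {bC bS : RatF N → RatF N → RatF N}
    (hC_gen2 : ∀ k : ZMod N,
      bC (Bgen N k) (Bgen N (k + 2)) =
        - (Bgen N k * Bgen N (k + 2)) / Bgen N (k + 1))
    (hC_gen0 : ∀ i j : ZMod N,
      j - i ≠ 1 → j - i ≠ -1 → j - i ≠ 2 → j - i ≠ -2 → bC (Bgen N i) (Bgen N j) = 0)
    (hS_add : ∀ x y z : RatF N, bS (x + y) z = bS x z + bS y z)
    (hS_smul : ∀ (c : ℝ) (x y : RatF N), bS (c • x) y = c • bS x y)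
    (hS_leib : ∀ x y z : RatF N, bS (x * y) z = x * bS y z + y * bS x z)
    (hS_gen : ∀ i j : ZMod N,
      bS (Bgen N i) (Bgen N j) =
        ((if i + 1 = j then (1 : ℝ) else 0) - (if i - 1 = j then (1 : ℝ) else 0)) •
          (Bgen N i * Bgen N j))
    {u v w : ZMod N} {d e : ℤ} (hv : v = u + d) (hw : w = v + e) (hd : 2 ≤ d) (he : 2 ≤ e)
    (hdeN : d + e ≤ N - 2) :
    bS (bC (Bgen N u) (Bgen N v)) (Bgen N w) = 0 := by
  let D : Derivation ℝ (RatF N) (RatF N) :=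
    Derivation.ofBracketLeft bS hS_add hS_smul hS_leib (Bgen N w)
  change D (bC (Bgen N u) (Bgen N v)) = 0
  rcases eq_or_lt_of_le hd with rfl | hd3
  · have hD : ∀ a : ℤ, 0 ≤ a → a ≤ 2 → D (Bgen N (u + a)) = 0 := fun a ha0 ha2 =>
      s2_Bgen_eq_zero_of_gap hS_gen (d := 2 - a + e) (by rw [hw, hv]; push_cast; ring)
        (by omega) (by omega)
    have hu : D (Bgen N u) = 0 := by simpa using hD 0 le_rfl zero_le_two
    have hu1 : D (Bgen N (u + 1)) = 0 := by exact_mod_cast hD 1 zero_le_one one_le_two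
    have hu2 : D (Bgen N (u + 2)) = 0 := by exact_mod_cast hD 2 zero_le_two le_rfl
    rw [hv, Int.cast_ofNat, hC_gen2, Derivation.leibniz_div, Derivation.map_neg,
      Derivation.leibniz, hu, hu1, hu2]
    simp
  · rw [c2n_Bgen_eq_zero_of_gap hC_gen0 hv (by omega) (by omega), map_zero]

theorem mixed_jacobiator_vanishes_generic_case (N : ℕ)
    (bC bS : RatF N → RatF N → RatF N)
    -- `{·,·}_{C2N}` is ℝ-bilinear, antisymmetric, and a derivation in each argument
    (hC_add : ∀ x y z : RatF N, bC (x + y) z = bC x z + bC y z)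
    -- values of `{·,·}_{C2N}` on the generators
    (hC_gen2 : ∀ k : ZMod N,
      bC (Bgen N k) (Bgen N (k + 2)) =
        - (Bgen N k * Bgen N (k + 2)) / Bgen N (k + 1))
    (hC_gen0 : ∀ i j : ZMod N,
      j - i ≠ 1 → j - i ≠ -1 → j - i ≠ 2 → j - i ≠ -2 → bC (Bgen N i) (Bgen N j) = 0)
    -- `{·,·}_{S2}` is ℝ-bilinear, antisymmetric, and a derivation in each argument
    (hS_add : ∀ x y z : RatF N, bS (x + y) z = bS x z + bS y z)
    (hS_smul : ∀ (c : ℝ) (x y : RatF N), bS (c • x) y = c • bS x y)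
    (hS_leib : ∀ x y z : RatF N, bS (x * y) z = x * bS y z + y * bS x z)
    -- values of `{·,·}_{S2}` on the generators
    (hS_gen : ∀ i j : ZMod N,
      bS (Bgen N i) (Bgen N j) =
        ((if i + 1 = j then (1 : ℝ) else 0) - (if i - 1 = j then (1 : ℝ) else 0)) •
          (Bgen N i * Bgen N j))
    (j k : ℤ)
    (hj : 1 < j - 1) (hmin : j - 1 = min (j - 1) (min (k - j) ((N : ℤ) + 1 - k))) :
      bS (bC (Bgen N 1) (Bgen N ((j : ZMod N)))) (Bgen N ((k : ZMod N))) +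
      bS (bC (Bgen N ((j : ZMod N))) (Bgen N ((k : ZMod N)))) (Bgen N 1) +
      bS (bC (Bgen N ((k : ZMod N))) (Bgen N 1)) (Bgen N ((j : ZMod N))) +
      bC (bS (Bgen N 1) (Bgen N ((j : ZMod N)))) (Bgen N ((k : ZMod N))) +
      bC (bS (Bgen N ((j : ZMod N))) (Bgen N ((k : ZMod N)))) (Bgen N 1) +
      bC (bS (Bgen N ((k : ZMod N))) (Bgen N 1)) (Bgen N ((j : ZMod N))) = 0 := by
  have hgaps : 2 ≤ k - j ∧ 2 ≤ (N : ℤ) + 1 - k := by omega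
  have hj' : (j : ZMod N) = 1 + ((j - 1 : ℤ) : ZMod N) := by push_cast; ring
  have hk' : (k : ZMod N) = j + ((k - j : ℤ) : ZMod N) := by push_cast; ring
  have h1' : (1 : ZMod N) = k + ((N + 1 - k : ℤ) : ZMod N) := by
    push_cast [ZMod.natCast_self]; ring
  have hS_zero := @s2_Bgen_eq_zero_of_gap N bS hS_gen
  have hSC_zero :=
    @s2_c2n_Bgen_eq_zero_of_gaps N bC bS hC_gen2 hC_gen0 hS_add hS_smul hS_leib hS_gen
  have hC_zero : ∀ x, bC 0 x = 0 := fun x => by simpa using hC_add 0 0 x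
  rw [hSC_zero hj' hk' (by omega) (by omega) (by omega),
    hSC_zero hk' h1' (by omega) (by omega) (by omega),
    hSC_zero h1' hj' (by omega) (by omega) (by omega),
    hS_zero hj' (by omega) (by omega), hS_zero hk' (by omega) (by omega),
    hS_zero h1' (by omega) (by omega), hC_zero, hC_zero, hC_zero]
  simp
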